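/- With the notation above, the following identities hold in A: Hh = δ·H; Hσ₁h = H; Hτ = (v²−1)·H; and H·C·τ = (v²−1−z²)·H. -/

import Mathlib

/- R = ℤ[v^{±1}, z^{±1}] modelled as the group algebra of ℤ × ℤ over ℤ:
   the coefficient of v^i z^j in P is `P (i, j)`. -/
noncomputable section

abbrev R2 : Type := AddMonoidAlgebra ℤ (ℤ × ℤ)

/-- `v` -/
def V : R2 := AddMonoidAlgebra.single (1, 0) 1
/-- `v⁻¹` -/
def Vi : R2 := AddMonoidAlgebra.single (-1, 0) 1
/-- `z` -/
def Z : R2 := AddMonoidAlgebra.single (0, 1) 1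
/-- `z⁻¹` -/
def Zi : R2 := AddMonoidAlgebra.single (0, -1) 1
/-- `δ = (v⁻¹ - v) z⁻¹` -/
def δR : R2 := (Vi - V) * Zi

variable {A : Type*} [Ring A] [Algebra R2 A]

/-- `c = v⁻¹ σ` -/
def cOf (σ : Aˣ) : A := Vi • (σ : A)
/-- `c⁻¹ = v σ⁻¹` -/
def cInvOf (σ : Aˣ) : A := V • ((σ⁻¹ : Aˣ) : A)
/-- `C = c₁ c₃` -/
def COf (σ₁ σ₃ : Aˣ) : A := cOf σ₁ * cOf σ₃
/-- `τ = (-zv) h` -/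
def τOf (h : A) : A := (-(Z * V)) • h

/-! Everything is read off the rightmost `h` in `H = h σ₁ σ₃⁻¹ h`: the relations `h² = δ h` and
`h σ₁ h = h` give `H h = δ H` and `H σ₁ h = H`, and `τ` is a scalar multiple of `h`. For the last
identity, the skein relation `σ₃ = v z + v² σ₃⁻¹` splits `H σ₁ σ₃ h` into `v z · H σ₁ h` and
`v² · H σ₁ σ₃⁻¹ h`, and the latter is `v² · H h` because `H σ₁ σ₃⁻¹ = H σ₃ σ₃⁻¹ = H`. -/

theorem V_mul_Vi : V * Vi = 1 := by
  simp [V, Vi, AddMonoidAlgebra.single_mul_single, AddMonoidAlgebra.one_def, Prod.mk_zero_zero]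

theorem Z_mul_Zi : Z * Zi = 1 := by
  simp [Z, Zi, AddMonoidAlgebra.single_mul_single, AddMonoidAlgebra.one_def, Prod.mk_zero_zero]

theorem neg_Z_mul_V_mul_δR : -(Z * V) * δR = V ^ 2 - 1 := by
  unfold δR
  linear_combination (V ^ 2 - V * Vi) * Z_mul_Zi - V_mul_Vi

section

variable {R B : Type*} [CommRing R] [Ring B] [Algebra R B]

theorem eq_add_smul_of_skein {a a' c : R} (ha : a * a' = 1) {x y : B}
    (hskein : a' • x - a • y = c • (1 : B)) : x = (a * c) • (1 : B) + (a * a) • y := by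
  rw [mul_smul, mul_smul, ← smul_add, ← sub_eq_iff_eq_add.mp hskein, smul_smul, ha, one_smul]

theorem mul_eq_smul_of_mul_self_eq_smul {x h H : B} {d : R} (hH : H = x * h)
    (hh : h * h = d • h) : H * h = d • H := by
  rw [hH, mul_assoc, hh, mul_smul_comm]

theorem mul_mul_eq_self_of_mul_mul_eq_self {x h H s : B} (hH : H = x * h) (hs : h * s * h = h) :
    H * s * h = H := by
  subst hH
  simp only [mul_assoc] at hs ⊢
  rw [hs]

end

theorem statement1_general (A : Type*) [Ring A] [Algebra R2 A]
    (σ₁ σ₃ : Aˣ) (h H : A)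
    (hskein3 : Vi • (σ₃ : A) - V • ((σ₃⁻¹ : Aˣ) : A) = Z • (1 : A))
    (hH2 : H * (σ₁ : A) = H * (σ₃ : A))
    (hHdef : H = h * (σ₁ : A) * ((σ₃⁻¹ : Aˣ) : A) * h)
    (hh2 : h * h = δR • h)
    (hh : h * (σ₁ : A) * h = h)
    :
    H * h = δR • H ∧
    H * (σ₁ : A) * h = H ∧
    H * τOf h = (V ^ 2 - 1) • H ∧
    H * COf σ₁ σ₃ * τOf h = (V ^ 2 - 1 - Z ^ 2) • H := by
  have hHh : H * h = δR • H := mul_eq_smul_of_mul_self_eq_smul hHdef hh2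
  have hHσ₁h : H * σ₁ * h = H := mul_mul_eq_self_of_mul_mul_eq_self hHdef hh
  have hHσ₁σ₃inv : H * σ₁ * ((σ₃⁻¹ : Aˣ) : A) = H := by rw [hH2, Units.mul_inv_cancel_right]
  have hHσ₁σ₃h : H * σ₁ * σ₃ * h = (V * Z + V * V * δR) • H := by
    rw [eq_add_smul_of_skein V_mul_Vi hskein3]
    simp only [mul_add, add_mul, mul_smul_comm, smul_mul_assoc, mul_one, hHσ₁h, hHσ₁σ₃inv, hHh,
      smul_smul, add_smul]
  refine ⟨hHh, hHσ₁h, ?_, ?_⟩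
  · rw [τOf, mul_smul_comm, hHh, smul_smul, neg_Z_mul_V_mul_δR]
  · calc H * COf σ₁ σ₃ * τOf h = (-(Z * V) * (Vi * Vi)) • (H * σ₁ * σ₃ * h) := by
          simp only [COf, cOf, τOf, mul_smul_comm, smul_mul_assoc, smul_smul, mul_assoc]
    _ = (V ^ 2 - 1 - Z ^ 2) • H := by
          rw [hHσ₁σ₃h, smul_smul]
          congr 1
          linear_combination (V * Vi) ^ 2 * neg_Z_mul_V_mul_δR
            + (V * Vi + 1) * (V ^ 2 - 1 - Z ^ 2) * V_mul_Vi

theorem statement1 (A : Type*) [Ring A] [Algebra R2 A]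
    (σ₁ σ₃ : Aˣ) (h H : A)
    (hcomm : (σ₁ : A) * σ₃ = (σ₃ : A) * σ₁)
    (hskein1 : Vi • (σ₁ : A) - V • ((σ₁⁻¹ : Aˣ) : A) = Z • (1 : A))
    (hskein3 : Vi • (σ₃ : A) - V • ((σ₃⁻¹ : Aˣ) : A) = Z • (1 : A))
    (hH1 : (σ₁ : A) * H = (σ₃ : A) * H)
    (hH2 : H * (σ₁ : A) = H * (σ₃ : A))
    (hHdef : H = h * (σ₁ : A) * ((σ₃⁻¹ : Aˣ) : A) * h)
    (hh2 : h * h = δR • h)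
    (hh : h * (σ₁ : A) * h = h)
    :
    H * h = δR • H ∧
    H * (σ₁ : A) * h = H ∧
    H * τOf h = (V ^ 2 - 1) • H ∧
    H * COf σ₁ σ₃ * τOf h = (V ^ 2 - 1 - Z ^ 2) • H :=
  statement1_general A σ₁ σ₃ h H hskein3 hH2 hHdef hh2 hh
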